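/- arXiv:0708.0102 — 2 statements merged into one kernel-verified Lean document; each statement's English description precedes it below -/
import Mathlib

section
/- In the same example, for any constants p_z⁰, q_z⁰, the curve λ(t) = (p_x, p_y, p_z, q_x, q_y, q_z)(t) = (0, 4p_z⁰, p_z⁰, 0, −4p_z⁰t + 4q_z⁰, −p_z⁰t + q_z⁰), together with the base curve γ(t) as above and controls u₁ = 0, u₂ = 2(v_y⁰−1), satisfies the adjoint (Hamilton) equations ṗ_x = q_y u₂ − 2q_z u₂ x, ṗ_y = 0, ṗ_z = 0, q̇_x = −p_x, q̇_y = −p_y, q̇_z = −p_z, and satisfies the abnormal constraints q_x = 0 and q_y(1−x) + q_z x² = 0 along the whole curve. -/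
/-- the explicit covector curve `λ(t)` along `γ`, with controls
`u₁ = 0`, `u₂ = 2(v_y⁰−1)`, satisfies the adjoint (Hamilton) equations for the
abnormal Hamiltonian and the abnormal constraints `q_x = 0`,
`q_y(1−x) + q_z x² = 0` along the whole curve. -/
theorem example_abnormal_biextremal (vy0 pz0 qz0 : ℝ)
    (u₁ u₂ : ℝ) (hu₁ : u₁ = 0) (hu₂ : u₂ = 2 * (vy0 - 1))
    (x : ℝ → ℝ) (hx : ∀ t, x t = 2)
    (px py pz qx qy qz : ℝ → ℝ)
    (hpx : ∀ t, px t = 0) (hpy : ∀ t, py t = 4 * pz0) (hpz : ∀ t, pz t = pz0)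
    (hqx : ∀ t, qx t = 0)
    (hqy : ∀ t, qy t = -4 * pz0 * t + 4 * qz0)
    (hqz : ∀ t, qz t = -pz0 * t + qz0) :
    (∀ t,
      HasDerivAt px (qy t * u₂ - 2 * qz t * u₂ * x t) t ∧
      HasDerivAt py 0 t ∧ HasDerivAt pz 0 t ∧
      HasDerivAt qx (-px t) t ∧ HasDerivAt qy (-py t) t ∧
      HasDerivAt qz (-pz t) t) ∧
    (∀ t, qx t = 0 ∧ qy t * (1 - x t) + qz t * (x t) ^ 2 = 0) := by
  have hpx' : px = fun _ => 0 := funext hpx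
  have hpy' : py = fun _ => 4 * pz0 := funext hpy
  have hpz' : pz = fun _ => pz0 := funext hpz
  have hqx' : qx = fun _ => 0 := funext hqx
  have hqy' : qy = fun t => -4 * pz0 * t + 4 * qz0 := funext hqy
  have hqz' : qz = fun t => -pz0 * t + qz0 := funext hqz
  constructor
  · intro t
    refine ⟨?_, ?_, ?_, ?_, ?_, ?_⟩
    · have : qy t * u₂ - 2 * qz t * u₂ * x t = 0 := by
        rw [hqy t, hqz t, hx t]; ring
      rw [this, hpx']; exact hasDerivAt_const t 0
    · rw [hpy']; exact hasDerivAt_const t _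
    · rw [hpz']; exact hasDerivAt_const t _
    · rw [hpx t, neg_zero, hqx']; exact hasDerivAt_const t 0
    · rw [hpy t, hqy']
      have := ((hasDerivAt_id t).const_mul (-4 * pz0)).add_const (4 * qz0)
      simpa using this.congr_deriv (by ring)
    · rw [hpz t, hqz']
      have := ((hasDerivAt_id t).const_mul (-pz0)).add_const qz0
      simpa using this.congr_deriv (by ring)
  · intro t
    refine ⟨hqx t, ?_⟩
    rw [hqy t, hqz t, hx t]; ring
end

section
/- In the same example, the extremal γ (with v_y⁰ ≠ 1) is strictly abnormal: there is no covector curve (p_x,p_y,p_z,q_x,q_y,q_z)(t) along γ satisfying the normal Hamilton equations for H^{[-1]} = H^{[0]} − (u₁²+u₂²)/2 together with the normal constraints u₁ = q_x and u₂ = q_y(1−x) + q_z x². Concretely: the constraints force q_x = 0 and u₂ = −q_y + 4q_z along γ; Hamilton's equation q̇_x = −p_x and v̇_x = u₁ = q_x = 0 force p_x = 0; then 0 = ṗ_x = u₂(q_y − 2xq_z) = u₂(q_y − 4q_z) = −u₂², contradicting u₂ = 2(1−v_y⁰) ≠ 0. -/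
/-- the extremal `γ` (with `v_y⁰ ≠ 1`) is strictly abnormal: there is
no covector curve along `γ` (on which `x ≡ 2`, `v_x ≡ 0`, `u₁ = 0`,
`u₂ = 2(v_y⁰−1)`) satisfying the normal Hamilton equations for
`H⁻¹ = H⁰ − (u₁²+u₂²)/2` together with the normal primary constraints
`u₁ = q_x` and `u₂ = q_y(1−x) + q_z x²`. -/
theorem example_strict_abnormal (vy0 : ℝ) (hvy0 : vy0 ≠ 1)
    (u₁ u₂ : ℝ) (hu₁ : u₁ = 0) (hu₂ : u₂ = 2 * (vy0 - 1))
    (x vx : ℝ → ℝ) (hx : ∀ t, x t = 2) (hvx : ∀ t, vx t = 0) :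
    ¬ ∃ px py pz qx qy qz : ℝ → ℝ,
      (∀ t ∈ Set.Icc (0 : ℝ) 1,
        HasDerivAt px (qy t * u₂ - 2 * qz t * u₂ * x t) t ∧
        HasDerivAt py 0 t ∧ HasDerivAt pz 0 t ∧
        HasDerivAt qx (-px t) t ∧ HasDerivAt qy (-py t) t ∧
        HasDerivAt qz (-pz t) t) ∧
      (∀ t ∈ Set.Icc (0 : ℝ) 1,
        qx t = u₁ ∧ qy t * (1 - x t) + qz t * (x t) ^ 2 = u₂) := by
  rintro ⟨px, py, pz, qx, qy, qz, hH, hC⟩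
  have hu2ne : u₂ ≠ 0 := by
    rw [hu₂]; intro h; apply hvy0; linarith
  -- qx vanishes on [0,1]
  have hqx0 : ∀ t ∈ Set.Icc (0 : ℝ) 1, qx t = 0 := fun t ht => by
    have := (hC t ht).1; rw [hu₁] at this; exact this
  -- px vanishes on (0,1)
  have hpx0 : ∀ t ∈ Set.Ioo (0 : ℝ) 1, px t = 0 := by
    intro t ht
    have hnhds : Set.Ioo (0 : ℝ) 1 ∈ nhds t := isOpen_Ioo.mem_nhds ht
    have heq : qx =ᶠ[nhds t] fun _ => (0 : ℝ) :=
      Filter.eventually_of_mem hnhds fun s hs =>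
        hqx0 s (Set.Ioo_subset_Icc_self hs)
    have h0 : HasDerivAt qx 0 t := (hasDerivAt_const t (0 : ℝ)).congr_of_eventuallyEq heq
    have h1 : HasDerivAt qx (-px t) t :=
      (hH t (Set.Ioo_subset_Icc_self ht)).2.2.2.1
    have := h1.unique h0
    linarith
  -- derivative of px at 1/2 is 0
  have hmem : (1/2 : ℝ) ∈ Set.Ioo (0 : ℝ) 1 := by norm_num
  have hnhds : Set.Ioo (0 : ℝ) 1 ∈ nhds (1/2 : ℝ) := isOpen_Ioo.mem_nhds hmem
  have heq : px =ᶠ[nhds (1/2 : ℝ)] fun _ => (0 : ℝ) :=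
    Filter.eventually_of_mem hnhds fun s hs => hpx0 s hs
  have h0 : HasDerivAt px 0 (1/2 : ℝ) :=
    (hasDerivAt_const (1/2 : ℝ) (0 : ℝ)).congr_of_eventuallyEq heq
  have h1 := (hH (1/2) (Set.Ioo_subset_Icc_self hmem)).1
  have hder : qy (1/2) * u₂ - 2 * qz (1/2) * u₂ * x (1/2) = 0 := h1.unique h0
  have hcon := (hC (1/2) (Set.Ioo_subset_Icc_self hmem)).2
  rw [hx (1/2)] at hder hcon
  -- hcon : qy (1/2) * (1 - 2) + qz (1/2) * 2 ^ 2 = u₂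
  apply hu2ne
  nlinarith [hder, hcon, sq_nonneg u₂]
end
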